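/- arXiv:0911.2203 — 4 statements merged into one kernel-verified Lean document; each statement's English description precedes it below -/
import Mathlib

section
/- Every tropical polynomial function factors into linear tropical factors (the tropical semifield is algebraically closed): let d ≥ 1, let S be a subset of {0,1,…,d} containing 0 and d, and let a : S → ℝ. Then there exist real numbers r₁ ≤ r₂ ≤ … ≤ r_d such that for all x ∈ ℝ, max_{i∈S}(a_i + i·x) = a_d + Σ_{j=1}^{d} max(x, r_j). -/
/-!
Induct on the degree `n = d + 1`. The largest root `R` of `P x = max_{i ∈ S} (a i + i x)` is the
least `R` with `a i ≤ a n + (n - i) R` for all `i ∈ S`; equality is attained at some `k < n`.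
Tropical division by `max x R` then leaves a polynomial of degree `d` with leading coefficient
`a n` and coefficients `a i - R` below, and its roots together with `R` are the roots of `P`.
Sorting the roots at the end makes them monotone.
-/

open Finset

theorem Finset.exists_forall_le_mul_and_eq_mul {ι : Type*} {T : Finset ι} (hT : T.Nonempty)
    (v w : ι → ℝ) (hw : ∀ i ∈ T, 0 < w i) :
    ∃ R, (∀ i ∈ T, v i ≤ w i * R) ∧ ∃ k ∈ T, v k = w k * R := by
  obtain ⟨k, hk, hkR⟩ := T.exists_mem_eq_sup' hT (fun i => v i / w i)
  refine ⟨v k / w k, fun i hi => ?_, k, hk, (mul_div_cancel₀ _ (hw k hk).ne').symm⟩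
  rw [← hkR, ← div_le_iff₀' (hw i hi)]
  exact T.le_sup' (fun i => v i / w i) hi

/-- Coefficients of the tropical quotient of a polynomial of degree `d + 1` by `max x R`. The
entry `a d - R` is overwritten by the leading coefficient `a (d + 1)`, which dominates it as soon
as `R` bounds the roots. -/
def quotientCoeff (a : ℕ → ℝ) (d : ℕ) (R : ℝ) : ℕ → ℝ :=
  Function.update (fun i => a i - R) d (a (d + 1))

section Division

variable {d k : ℕ} {S : Finset ℕ} {a : ℕ → ℝ} {R : ℝ}

@[simp]
theorem quotientCoeff_self : quotientCoeff a d R d = a (d + 1) :=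
  Function.update_self ..

theorem quotientCoeff_of_ne {i : ℕ} (h : i ≠ d) : quotientCoeff a d R i = a i - R :=
  Function.update_of_ne h ..

theorem sup'_le_max_add_sup'_quotientCoeff
    (hR : ∀ i ∈ S.erase (d + 1), a i - a (d + 1) ≤ ((d : ℝ) + 1 - i) * R)
    (hne : S.Nonempty) (x : ℝ) :
    S.sup' hne (fun i => a i + (i : ℝ) * x) ≤
      max x R + (insert d (S.erase (d + 1))).sup' (insert_nonempty _ _)
        (fun i => quotientCoeff a d R i + (i : ℝ) * x) := by
  set Q := (insert d (S.erase (d + 1))).sup' (insert_nonempty _ _)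
    (fun i => quotientCoeff a d R i + (i : ℝ) * x)
  have hQ : ∀ i ∈ insert d (S.erase (d + 1)), quotientCoeff a d R i + (i : ℝ) * x ≤ Q :=
    fun i hi => le_sup' (fun i => quotientCoeff a d R i + (i : ℝ) * x) hi
  refine sup'_le _ _ fun i hi => ?_
  by_cases hin : i = d + 1
  · have := hQ d (mem_insert_self _ _)
    subst hin
    simp only [quotientCoeff_self, Nat.cast_add, Nat.cast_one] at this ⊢
    linarith [le_max_left x R]
  have hiT : i ∈ S.erase (d + 1) := mem_erase.2 ⟨hin, hi⟩
  have hcoeff : a i ≤ R + quotientCoeff a d R i := by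
    by_cases hid : i = d
    · subst hid
      simpa [add_comm] using hR i hiT
    · rw [quotientCoeff_of_ne hid]
      linarith
  linarith [hQ i (mem_insert_of_mem hiT), le_max_right x R]

theorem max_add_sup'_quotientCoeff_le (hSn : ∀ i ∈ S, i ≤ d + 1) (hn : d + 1 ∈ S)
    (hR : ∀ i ∈ S.erase (d + 1), a i - a (d + 1) ≤ ((d : ℝ) + 1 - i) * R)
    (hk : k ∈ S.erase (d + 1)) (hkR : a k - a (d + 1) = ((d : ℝ) + 1 - k) * R)
    (hne : S.Nonempty) (x : ℝ) :
    max x R + (insert d (S.erase (d + 1))).sup' (insert_nonempty _ _)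
        (fun i => quotientCoeff a d R i + (i : ℝ) * x) ≤
      S.sup' hne (fun i => a i + (i : ℝ) * x) := by
  set P := S.sup' hne (fun i => a i + (i : ℝ) * x)
  have hP : ∀ i ∈ S, a i + (i : ℝ) * x ≤ P := fun i hi => le_sup' (fun i => a i + (i : ℝ) * x) hi
  have hlead : a (d + 1) + ((d : ℝ) + 1) * x ≤ P := by exact_mod_cast hP _ hn
  have hle : ∀ i ∈ S.erase (d + 1), (i : ℝ) ≤ d := fun i hi => by
    have := hSn i (mem_of_mem_erase hi)
    exact_mod_cast Nat.le_of_lt_succ (lt_of_le_of_ne this (ne_of_mem_erase hi))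
  rw [add_comm, sup'_add]
  refine sup'_le _ _ fun j hj => ?_
  rw [← max_add_add_left]
  by_cases hjd : j = d
  · rw [hjd, quotientCoeff_self]
    refine max_le (by linarith) ?_
    -- left of `R` the `k`-th term dominates, right of `R` the leading one
    rcases le_total x R with hxR | hRx
    · nlinarith [hP k (mem_of_mem_erase hk), hle k hk]
    · linarith
  · have hjT : j ∈ S.erase (d + 1) := mem_of_mem_insert_of_ne hj hjd
    have := hP j (mem_of_mem_erase hjT)
    rw [quotientCoeff_of_ne hjd]
    refine max_le ?_ (by linarith)
    rcases le_total x R with hxR | hRx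
    · linarith
    · nlinarith [hR j hjT, hle j hjT]

theorem sup'_eq_max_add_sup'_quotientCoeff (hSn : ∀ i ∈ S, i ≤ d + 1) (hn : d + 1 ∈ S)
    (hR : ∀ i ∈ S.erase (d + 1), a i - a (d + 1) ≤ ((d : ℝ) + 1 - i) * R)
    (hk : k ∈ S.erase (d + 1)) (hkR : a k - a (d + 1) = ((d : ℝ) + 1 - k) * R)
    (hne : S.Nonempty) (x : ℝ) :
    S.sup' hne (fun i => a i + (i : ℝ) * x) =
      max x R + (insert d (S.erase (d + 1))).sup' (insert_nonempty _ _)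
        (fun i => quotientCoeff a d R i + (i : ℝ) * x) :=
  le_antisymm (sup'_le_max_add_sup'_quotientCoeff hR hne x)
    (max_add_sup'_quotientCoeff_le hSn hn hR hk hkR hne x)

end Division

theorem exists_sup'_eq_add_sum_max (d : ℕ) (S : Finset ℕ) (hS : S ⊆ range (d + 1)) (h0 : 0 ∈ S)
    (hdS : d ∈ S) (a : ℕ → ℝ) :
    ∃ r : Fin d → ℝ, ∀ x : ℝ,
      S.sup' ⟨0, h0⟩ (fun i => a i + (i : ℝ) * x) = a d + ∑ j, max x (r j) := by
  induction d generalizing S a with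
  | zero =>
    refine ⟨Fin.elim0, fun x => sup'_eq_of_forall _ _ fun i hi => ?_⟩
    obtain rfl : i = 0 := by simpa using hS hi
    simp
  | succ d ih =>
    have hSn : ∀ i ∈ S, i ≤ d + 1 := fun i hi => Nat.le_of_lt_succ (mem_range.1 (hS hi))
    have hT0 : 0 ∈ S.erase (d + 1) := mem_erase.2 ⟨(Nat.succ_ne_zero d).symm, h0⟩
    have hTd : ∀ i ∈ S.erase (d + 1), i < d + 1 := fun i hi =>
      lt_of_le_of_ne (hSn i (mem_of_mem_erase hi)) (ne_of_mem_erase hi)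
    obtain ⟨R, hR, k, hk, hkR⟩ := exists_forall_le_mul_and_eq_mul ⟨0, hT0⟩
      (fun i => a i - a (d + 1)) (fun i => (d : ℝ) + 1 - i) fun i hi => by
        have : (i : ℝ) < d + 1 := by exact_mod_cast hTd i hi
        linarith
    have hQS : insert d (S.erase (d + 1)) ⊆ range (d + 1) :=
      insert_subset (self_mem_range_succ d) fun i hi => mem_range.2 (hTd i hi)
    obtain ⟨r, hr⟩ := ih _ hQS (mem_insert_of_mem hT0) (mem_insert_self _ _) (quotientCoeff a d R)
    refine ⟨Fin.cons R r, fun x => ?_⟩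
    refine (sup'_eq_max_add_sup'_quotientCoeff hSn hdS hR hk hkR _ x).trans ?_
    simp only [hr x, quotientCoeff_self, Fin.sum_univ_succ, Fin.cons_zero, Fin.cons_succ]
    ring

theorem tropical_fundamental_theorem_general (d : ℕ) (S : Finset ℕ)
    (hS : S ⊆ Finset.range (d + 1)) (h0 : (0 : ℕ) ∈ S) (hdS : d ∈ S) (a : ℕ → ℝ) :
    ∃ r : Fin d → ℝ, Monotone r ∧
      ∀ x : ℝ, S.sup' ⟨0, h0⟩ (fun i => a i + (i : ℝ) * x)
        = a d + ∑ j : Fin d, max x (r j) := by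
  obtain ⟨r, hr⟩ := exists_sup'_eq_add_sum_max d S hS h0 hdS a
  refine ⟨r ∘ Tuple.sort r, Tuple.monotone_sort r, fun x => ?_⟩
  rw [hr x, ← Equiv.sum_comp (Tuple.sort r)]
  rfl

/-- The tropical semifield is algebraically closed: every tropical polynomial
function `x ↦ max_{i ∈ S} (a i + i·x)` of degree `d` factors as the tropical
product of the constant `a d` and `d` tropical linear factors `max x (r j)`,
with ordered roots `r 1 ≤ … ≤ r d`. -/
theorem tropical_fundamental_theorem (d : ℕ) (hd : 1 ≤ d) (S : Finset ℕ)
    (hS : S ⊆ Finset.range (d + 1)) (h0 : (0 : ℕ) ∈ S) (hdS : d ∈ S) (a : ℕ → ℝ) :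
    ∃ r : Fin d → ℝ, Monotone r ∧
      ∀ x : ℝ, S.sup' ⟨0, h0⟩ (fun i => a i + (i : ℝ) * x)
        = a d + ∑ j : Fin d, max x (r j) :=
  tropical_fundamental_theorem_general d S hS h0 hdS a
end

section
/- Tropical Bézout theorem for two lines: let L₁ and L₂ be tropical lines in ℝ², i.e. L_i is the corner locus of max(a_i + x, b_i + y, c_i) for some a_i, b_i, c_i ∈ ℝ. If the intersection L₁ ∩ L₂ is finite, then it consists of exactly one point. -/
/-!
A tropical line is a translate of the tripod made of the rays from its vertex in the directions
`(-1, 0)`, `(0, -1)` and `(1, 1)`; the corner locus of `max(a + x, b + y, c)` has vertex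
`(c - a, c - b)`. If the vertices of two lines agree in a coordinate, or lie on a common line of
slope one, the two tripods share a whole ray. Otherwise each pair of rays of different directions
meets in at most one point, and the intersection is the single point given by tropical
Cramer's rule.
-/

def tropicalLine (v : ℝ × ℝ) : Set (ℝ × ℝ) :=
  {p | (p.1 - v.1 = p.2 - v.2 ∧ v.1 ≤ p.1) ∨ (p.1 = v.1 ∧ p.2 ≤ v.2) ∨ (p.2 = v.2 ∧ p.1 ≤ v.1)}

lemma cornerLocus_eq_tropicalLine (a b c : ℝ) :
    {p : ℝ × ℝ | (a + p.1 = b + p.2 ∧ c ≤ a + p.1) ∨ (a + p.1 = c ∧ b + p.2 ≤ c) ∨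
      (b + p.2 = c ∧ a + p.1 ≤ c)} = tropicalLine (c - a, c - b) := by
  ext p
  simp only [tropicalLine, Set.mem_ofPred_eq]
  refine or_congr ?_ (or_congr ?_ ?_) <;>
    constructor <;> rintro ⟨h₁, h₂⟩ <;> constructor <;> linarith

lemma infinite_of_forall_add_smul_mem {E : Type*} [AddCommGroup E] [Module ℝ E] {S : Set E}
    (p u : E) (hu : u ≠ 0) (h : ∀ t : ℝ, 0 ≤ t → p + t • u ∈ S) : S.Infinite := by
  have hinj : Function.Injective fun t : ℝ => p + t • u :=
    (add_right_injective p).comp (smul_left_injective ℝ hu)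
  exact ((Set.Ici_infinite 0).image hinj.injOn).mono (Set.image_subset_iff.2 h)

lemma tropicalLine_inter_infinite {v w : ℝ × ℝ}
    (h : v.1 = w.1 ∨ v.2 = w.2 ∨ v.1 - v.2 = w.1 - w.2) :
    (tropicalLine v ∩ tropicalLine w).Infinite := by
  rcases h with h | h | h
  · refine infinite_of_forall_add_smul_mem (v.1, min v.2 w.2) (0, -1) (by simp) fun t ht => ?_
    have := min_le_left v.2 w.2
    have := min_le_right v.2 w.2
    simp only [tropicalLine, Set.mem_inter_iff, Set.mem_ofPred_eq, Prod.fst_add, Prod.snd_add,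
      Prod.smul_fst, Prod.smul_snd, smul_eq_mul]
    refine ⟨Or.inr (Or.inl ⟨by simp, by linarith⟩), Or.inr (Or.inl ⟨by simp [h], by linarith⟩)⟩
  · refine infinite_of_forall_add_smul_mem (min v.1 w.1, v.2) (-1, 0) (by simp) fun t ht => ?_
    have := min_le_left v.1 w.1
    have := min_le_right v.1 w.1
    simp only [tropicalLine, Set.mem_inter_iff, Set.mem_ofPred_eq, Prod.fst_add, Prod.snd_add,
      Prod.smul_fst, Prod.smul_snd, smul_eq_mul]
    refine ⟨Or.inr (Or.inr ⟨by simp, by linarith⟩), Or.inr (Or.inr ⟨by simp [h], by linarith⟩)⟩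
  · refine infinite_of_forall_add_smul_mem (max v.1 w.1, max v.1 w.1 - v.1 + v.2) (1, 1) (by simp)
      fun t ht => ?_
    have := le_max_left v.1 w.1
    have := le_max_right v.1 w.1
    simp only [tropicalLine, Set.mem_inter_iff, Set.mem_ofPred_eq, Prod.fst_add, Prod.snd_add,
      Prod.smul_fst, Prod.smul_snd, smul_eq_mul]
    refine ⟨Or.inl ⟨by linarith, by linarith⟩, Or.inl ⟨by linarith, by linarith⟩⟩

/-- Tropical Cramer's rule: the point `(X - Z, Y - Z)`, where `X`, `Y`, `Z` are the tropical
`2 × 2` minors of the coefficient matrix `!![-v.1, -v.2, 0; -w.1, -w.2, 0]` of the polynomials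
`max(x - v.1, y - v.2, 0)` and `max(x - w.1, y - w.2, 0)` obtained by deleting the
first, second and third column. -/
def cramerPoint (v w : ℝ × ℝ) : ℝ × ℝ :=
  (min (v.1 + w.2) (v.2 + w.1) - min v.2 w.2, min (v.1 + w.2) (v.2 + w.1) - min v.1 w.1)

lemma cramerPoint_comm (v w : ℝ × ℝ) : cramerPoint v w = cramerPoint w v := by
  simp only [cramerPoint, min_comm v.2 w.2, min_comm v.1 w.1, add_comm v.1, add_comm v.2,
    min_comm (w.2 + v.1)]

lemma cramerPoint_mem_tropicalLine (v w : ℝ × ℝ) : cramerPoint v w ∈ tropicalLine v := by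
  simp only [cramerPoint, tropicalLine, Set.mem_ofPred_eq, min_def]
  split_ifs <;>
    first
    | exact Or.inl ⟨by linarith, by linarith⟩
    | exact Or.inr (Or.inl ⟨by linarith, by linarith⟩)
    | exact Or.inr (Or.inr ⟨by linarith, by linarith⟩)

lemma eq_cramerPoint_of_mem_tropicalLine_inter {v w q : ℝ × ℝ} (h₁ : v.1 ≠ w.1) (h₂ : v.2 ≠ w.2)
    (h₃ : v.1 - v.2 ≠ w.1 - w.2) (hq : q ∈ tropicalLine v ∩ tropicalLine w) :
    q = cramerPoint v w := by
  obtain ⟨hv, hw⟩ := hq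
  simp only [tropicalLine, Set.mem_ofPred_eq] at hv hw
  -- Rays of equal directions meet only in the three degenerate positions; rays of different
  -- directions meet in at most one point.
  rcases hv with ⟨e, l⟩ | ⟨e, l⟩ | ⟨e, l⟩ <;> rcases hw with ⟨e', l'⟩ | ⟨e', l'⟩ | ⟨e', l'⟩
  all_goals first
    | exact absurd (by linarith) h₁
    | exact absurd (by linarith) h₂
    | exact absurd (by linarith) h₃
    | refine Prod.ext ?_ ?_ <;> simp only [cramerPoint, min_def] <;> split_ifs <;> linarith

lemma exists_tropicalLine_inter_eq_singleton {v w : ℝ × ℝ}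
    (hfin : (tropicalLine v ∩ tropicalLine w).Finite) :
    ∃ p, tropicalLine v ∩ tropicalLine w = {p} := by
  have h₁ : v.1 ≠ w.1 := fun h => tropicalLine_inter_infinite (Or.inl h) hfin
  have h₂ : v.2 ≠ w.2 := fun h => tropicalLine_inter_infinite (Or.inr (Or.inl h)) hfin
  have h₃ : v.1 - v.2 ≠ w.1 - w.2 := fun h =>
    tropicalLine_inter_infinite (Or.inr (Or.inr h)) hfin
  refine ⟨cramerPoint v w, Set.eq_singleton_iff_unique_mem.2 ⟨⟨?_, ?_⟩, ?_⟩⟩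
  · exact cramerPoint_mem_tropicalLine v w
  · exact cramerPoint_comm v w ▸ cramerPoint_mem_tropicalLine w v
  · exact fun q hq => eq_cramerPoint_of_mem_tropicalLine_inter h₁ h₂ h₃ hq

/-- Tropical Bézout theorem for two lines: if two tropical lines (corner loci of
degree-1 tropical polynomials) intersect in a finite set, then that set consists of
exactly one point. -/
theorem tropical_bezout_two_lines (a₁ b₁ c₁ a₂ b₂ c₂ : ℝ) (L₁ L₂ : Set (ℝ × ℝ))
    (hL₁ : L₁ = {p : ℝ × ℝ | (a₁ + p.1 = b₁ + p.2 ∧ c₁ ≤ a₁ + p.1) ∨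
        (a₁ + p.1 = c₁ ∧ b₁ + p.2 ≤ c₁) ∨ (b₁ + p.2 = c₁ ∧ a₁ + p.1 ≤ c₁)})
    (hL₂ : L₂ = {p : ℝ × ℝ | (a₂ + p.1 = b₂ + p.2 ∧ c₂ ≤ a₂ + p.1) ∨
        (a₂ + p.1 = c₂ ∧ b₂ + p.2 ≤ c₂) ∨ (b₂ + p.2 = c₂ ∧ a₂ + p.1 ≤ c₂)})
    (hfin : (L₁ ∩ L₂).Finite) :
    ∃ p : ℝ × ℝ, L₁ ∩ L₂ = {p} := by
  rw [hL₁, hL₂, cornerLocus_eq_tropicalLine, cornerLocus_eq_tropicalLine] at hfin ⊢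
  exact exists_tropicalLine_inter_eq_singleton hfin
end

section
/- Every point of the tropical line is a limit of amoeba points of the classical line x − y + 1 = 0 (dequantification of a line, surjectivity direction): let (u, v) ∈ ℝ² be a point where the maximum max(u, v, 0) is attained at least twice. Then there exist functions z, w : (1, ∞) → ℂ with z(t) − w(t) + 1 = 0 and z(t) ≠ 0, w(t) ≠ 0 for all t > 1, such that (log_t |z(t)|, log_t |w(t)|) converges to (u, v) as t → ∞. -/
open Filter

/-!
As `x ↦ t ^ x` is monotone for `t ≥ 1`, the maximum of `t ^ u`, `t ^ v`, `1` is again attained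
twice, so these three numbers satisfy the triangle inequalities. Hence there is a triangle with
vertices `0`, `-1`, `z` and sides `‖z‖ = t ^ u`, `‖z + 1‖ = t ^ v`; with `w = z + 1` the amoeba
point `(log_t ‖z‖, log_t ‖w‖)` is then exactly `(u, v)` for every `t > 1`.
-/

/-- `MaxAttainedTwice u v 0` says that `(u, v)` lies on the tropical line. -/
def MaxAttainedTwice (a b c : ℝ) : Prop :=
  (a = b ∧ c ≤ a) ∨ (a = c ∧ b ≤ c) ∨ (b = c ∧ a ≤ c)

theorem MaxAttainedTwice.map {a b c : ℝ} (h : MaxAttainedTwice a b c) {f : ℝ → ℝ}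
    (hf : Monotone f) : MaxAttainedTwice (f a) (f b) (f c) := by
  rcases h with ⟨rfl, h⟩ | ⟨rfl, h⟩ | ⟨rfl, h⟩
  exacts [.inl ⟨rfl, hf h⟩, .inr (.inl ⟨rfl, hf h⟩), .inr (.inr ⟨rfl, hf h⟩)]

theorem MaxAttainedTwice.triangle_ineqs {a b : ℝ} (h : MaxAttainedTwice a b 1) (ha : 0 ≤ a)
    (hb : 0 ≤ b) : b ≤ a + 1 ∧ a ≤ b + 1 ∧ 1 ≤ a + b := by
  rcases h with ⟨rfl, _⟩ | ⟨rfl, _⟩ | ⟨rfl, _⟩ <;> refine ⟨?_, ?_, ?_⟩ <;> linarith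

theorem Complex.exists_norm_eq_norm_add_one_eq {a b : ℝ} (hba : b ≤ a + 1) (hab : a ≤ b + 1)
    (hsum : 1 ≤ a + b) : ∃ z : ℂ, ‖z‖ = a ∧ ‖z + 1‖ = b := by
  have ha : 0 ≤ a := by linarith
  have hb : 0 ≤ b := by linarith
  obtain ⟨x, hx⟩ : ∃ x : ℝ, 2 * x = b ^ 2 - a ^ 2 - 1 := ⟨_, mul_div_cancel₀ _ two_ne_zero⟩
  -- `4 (a² - x²)` factors as `(a + 1 - b)(a + 1 + b)(b - a + 1)(a + b - 1)`.
  have hxa : x ^ 2 ≤ a ^ 2 := by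
    have := mul_nonneg (mul_nonneg (mul_nonneg (sub_nonneg.2 hba) (by linarith : 0 ≤ a + 1 + b))
      (by linarith : 0 ≤ b - a + 1)) (sub_nonneg.2 hsum)
    nlinarith
  have hy := Real.sq_sqrt (sub_nonneg.2 hxa)
  refine ⟨⟨x, √(a ^ 2 - x ^ 2)⟩, ?_, ?_⟩
  · rw [← sq_eq_sq₀ (norm_nonneg _) ha, Complex.sq_norm, Complex.normSq_mk]
    linear_combination hy
  · have : (⟨x, √(a ^ 2 - x ^ 2)⟩ + 1 : ℂ) = ⟨x + 1, √(a ^ 2 - x ^ 2)⟩ :=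
      Complex.ext (by simp) (by simp)
    rw [this, ← sq_eq_sq₀ (norm_nonneg _) hb, Complex.sq_norm, Complex.normSq_mk]
    linear_combination hy + hx

theorem exists_norm_eq_rpow_norm_add_one_eq_rpow {u v t : ℝ} (h : MaxAttainedTwice u v 0)
    (ht : 1 ≤ t) : ∃ z : ℂ, ‖z‖ = t ^ u ∧ ‖z + 1‖ = t ^ v := by
  have hpow := h.map (Real.monotone_rpow_of_base_ge_one ht)
  rw [Real.rpow_zero] at hpow
  have ht0 : 0 ≤ t := by linarith
  obtain ⟨hba, hab, hsum⟩ :=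
    hpow.triangle_ineqs (Real.rpow_nonneg ht0 u) (Real.rpow_nonneg ht0 v)
  exact Complex.exists_norm_eq_norm_add_one_eq hba hab hsum

/-- Dequantification of a line, surjectivity direction: every point `(u,v)` of the
tropical line (where the maximum `max u (max v 0)` is attained by at least two of the
terms `u`, `v`, `0`) is the limit of amoeba points of the classical line
`z - w + 1 = 0`: there are points `(z(t), w(t))` on the line with nonzero coordinates
such that `(log_t |z(t)|, log_t |w(t)|) → (u, v)` as `t → ∞`. -/
theorem tropical_line_point_is_amoeba_limit (u v : ℝ)
    (h : (u = v ∧ 0 ≤ u) ∨ (u = 0 ∧ v ≤ 0) ∨ (v = 0 ∧ u ≤ 0)) :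
    ∃ z w : ℝ → ℂ,
      (∀ t : ℝ, 1 < t → z t - w t + 1 = 0 ∧ z t ≠ 0 ∧ w t ≠ 0) ∧
      Tendsto (fun t : ℝ =>
          (Real.logb t ‖z t‖, Real.logb t ‖w t‖))
        atTop (nhds (u, v)) := by
  have hpt (t : ℝ) (ht : 1 < t) : ∃ z : ℂ, ‖z‖ = t ^ u ∧ ‖z + 1‖ = t ^ v :=
    exists_norm_eq_rpow_norm_add_one_eq_rpow h ht.le
  choose! z hz using hpt
  refine ⟨z, fun t ↦ z t + 1, fun t ht ↦ ⟨by ring, ?_, ?_⟩, ?_⟩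
  · rw [← norm_ne_zero_iff, (hz t ht).1]
    exact (Real.rpow_pos_of_pos (by linarith) u).ne'
  · rw [← norm_ne_zero_iff, (hz t ht).2]
    exact (Real.rpow_pos_of_pos (by linarith) v).ne'
  · refine tendsto_const_nhds.congr' ?_
    filter_upwards [eventually_gt_atTop 1] with t ht
    have ht0 : 0 < t := by linarith
    rw [(hz t ht).1, (hz t ht).2, Real.logb_rpow ht0 ht.ne', Real.logb_rpow ht0 ht.ne']
end

section
/- A tropical curve of degree d has at most d² vertices: let d ≥ 1 and let a : {(i,j) ∈ ℤ≥0 × ℤ≥0 : i + j ≤ d} → ℝ, defining the tropical polynomial P(x,y) = max_{i+j≤d}(a(i,j) + i·x + j·y). For p ∈ ℝ², let S(p) = {(i,j) : i + j ≤ d and a(i,j) + i·p₁ + j·p₂ = P(p)} be the set of exponents attaining the maximum at p. Then the set of points p ∈ ℝ² for which S(p) contains three affinely independent points (i.e., is not contained in an affine line) is finite and has cardinality at most d². -/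
/-- The support of a tropical polynomial of degree `d` in two variables: the lattice
points `(i,j)` with `i + j ≤ d`. -/
def tropSupport (d : ℕ) : Finset (ℕ × ℕ) :=
  (Finset.range (d + 1) ×ˢ Finset.range (d + 1)).filter fun m => m.1 + m.2 ≤ d

theorem tropSupport_nonempty (d : ℕ) : (tropSupport d).Nonempty :=
  ⟨(0, 0), by simp [tropSupport]⟩

/-- The tropical polynomial `P(x,y) = max_{i+j≤d} (a(i,j) + i·x + j·y)`. -/
noncomputable def tropPoly (d : ℕ) (a : ℕ × ℕ → ℝ) (p : ℝ × ℝ) : ℝ :=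
  (tropSupport d).sup' (tropSupport_nonempty d)
    fun m => a m + (m.1 : ℝ) * p.1 + (m.2 : ℝ) * p.2

/-- The vertices of the tropical curve defined by `tropPoly d a`: the points `p`
where the set `S(p)` of exponents attaining the maximum contains three affinely
independent points (i.e. is not contained in an affine line). -/
def tropVertices (d : ℕ) (a : ℕ × ℕ → ℝ) : Set (ℝ × ℝ) :=
  {p | ∃ m₁ ∈ tropSupport d, ∃ m₂ ∈ tropSupport d, ∃ m₃ ∈ tropSupport d,
    a m₁ + (m₁.1 : ℝ) * p.1 + (m₁.2 : ℝ) * p.2 = tropPoly d a p ∧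
    a m₂ + (m₂.1 : ℝ) * p.1 + (m₂.2 : ℝ) * p.2 = tropPoly d a p ∧
    a m₃ + (m₃.1 : ℝ) * p.1 + (m₃.2 : ℝ) * p.2 = tropPoly d a p ∧
    AffineIndependent ℝ ![((m₁.1 : ℝ), (m₁.2 : ℝ)), ((m₂.1 : ℝ), (m₂.2 : ℝ)),
      ((m₃.1 : ℝ), (m₃.2 : ℝ))]}

/-!
Each vertex `p` contributes a lattice triangle with vertices in `S(p)`. Such a triangle lies in
the Newton triangle `Δ_d` and in the subdifferential of `P` at `p`; subdifferentials at distinct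
points meet only in a line, so these triangles have pairwise null intersections. A lattice
triangle has area at least `1/2` and `Δ_d` has area `d²/2`, so there are at most `d²` of them.
-/

open MeasureTheory Set ENNReal Function

theorem Set.finite_and_ncard_le_of_forall_finset_card_le {α : Type*} {s : Set α} {n : ℕ}
    (h : ∀ F : Finset α, ↑F ⊆ s → F.card ≤ n) : s.Finite ∧ s.ncard ≤ n := by
  have hfin : s.Finite := by
    by_contra hinf
    obtain ⟨F, hFs, hF⟩ := Set.Infinite.exists_subset_card_eq hinf (n + 1)
    have := h F hFs
    omega
  refine ⟨hfin, ?_⟩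
  rw [Set.ncard_eq_toFinset_card _ hfin]
  exact h _ (by simp)

theorem MeasureTheory.card_mul_le_measure_of_pairwise_aedisjoint {α ι : Type*}
    [MeasurableSpace α] {μ : Measure α} {s : Finset ι} {t : ι → Set α} {B : Set α} {c : ℝ≥0∞}
    (hmeas : ∀ i ∈ s, NullMeasurableSet (t i) μ) (hdisj : (s : Set ι).Pairwise (AEDisjoint μ on t))
    (hsub : ∀ i ∈ s, t i ⊆ B) (hc : ∀ i ∈ s, c ≤ μ (t i)) : s.card * c ≤ μ B :=
  calc (s.card : ℝ≥0∞) * c = ∑ _i ∈ s, c := by rw [Finset.sum_const, nsmul_eq_mul]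
    _ ≤ ∑ i ∈ s, μ (t i) := Finset.sum_le_sum hc
    _ = μ (⋃ i ∈ s, t i) := (measure_biUnion_finset₀ hdisj hmeas).symm
    _ ≤ μ B := measure_mono (iUnion₂_subset hsub)

theorem smul_add_smul_add_smul_mem_convexHull {E : Type*} [AddCommGroup E] [Module ℝ E]
    {u v w : E} {α β γ : ℝ} (hα : 0 ≤ α) (hβ : 0 ≤ β) (hγ : 0 ≤ γ) (h : α + β + γ = 1) :
    α • u + β • v + γ • w ∈ convexHull ℝ {u, v, w} := by
  have := (convex_convexHull ℝ {u, v, w}).sum_mem (t := Finset.univ) (w := ![α, β, γ])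
    (z := ![u, v, w]) (by intro i _; fin_cases i <;> simpa)
    (by simpa [Fin.sum_univ_three] using h)
    (by intro i _; fin_cases i <;> exact subset_convexHull ℝ _ (by simp))
  simpa [Fin.sum_univ_three] using this

namespace TropicalCurve

theorem volume_setOf_mul_add_mul_eq {x : ℝ × ℝ} (hx : x ≠ 0) (c : ℝ) :
    volume {z : ℝ × ℝ | z.1 * x.1 + z.2 * x.2 = c} = 0 := by
  let ℓ : (ℝ × ℝ) →ᵃ[ℝ] ℝ := (x.1 • LinearMap.fst ℝ ℝ ℝ + x.2 • LinearMap.snd ℝ ℝ ℝ).toAffineMap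
  let L : AffineSubspace ℝ (ℝ × ℝ) := (AffineSubspace.mk' c ⊥).comap ℓ
  have hL : (L : Set (ℝ × ℝ)) = {z | z.1 * x.1 + z.2 * x.2 = c} := by
    ext z
    simp [L, ℓ, AffineSubspace.mem_mk', mul_comm, sub_eq_zero]
  rw [← hL]
  refine Measure.addHaar_affineSubspace _ L fun htop => hx ?_
  have h0 : (0 : ℝ × ℝ) ∈ (L : Set (ℝ × ℝ)) := by rw [htop]; trivial
  have h1 : x ∈ (L : Set (ℝ × ℝ)) := by rw [htop]; trivial
  rw [hL] at h0 h1
  simp only [mem_ofPred_eq, Prod.fst_zero, Prod.snd_zero, zero_mul, add_zero] at h0 h1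
  exact Prod.ext (show x.1 = 0 by nlinarith) (show x.2 = 0 by nlinarith)

def subdifferential (f : ℝ × ℝ → ℝ) (p : ℝ × ℝ) : Set (ℝ × ℝ) :=
  {z | ∀ q, f p + (z.1 * (q.1 - p.1) + z.2 * (q.2 - p.2)) ≤ f q}

theorem convex_subdifferential (f : ℝ × ℝ → ℝ) (p : ℝ × ℝ) : Convex ℝ (subdifferential f p) := by
  intro z hz w hw s t hs ht hst q
  have hzq := mul_le_mul_of_nonneg_left (hz q) hs
  have hwq := mul_le_mul_of_nonneg_left (hw q) ht
  simp only [Prod.fst_add, Prod.snd_add, Prod.smul_fst, Prod.smul_snd, smul_eq_mul]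
  linear_combination hzq + hwq + (f q - f p) * hst

theorem aedisjoint_subdifferential (f : ℝ × ℝ → ℝ) {p q : ℝ × ℝ} (hpq : p ≠ q) :
    AEDisjoint volume (subdifferential f p) (subdifferential f q) := by
  refine measure_mono_null (fun z hz => ?_)
    (volume_setOf_mul_add_mul_eq (sub_ne_zero.2 hpq.symm) (f q - f p))
  have hp := hz.1 q
  have hq := hz.2 p
  simp only [mem_ofPred_eq, Prod.fst_sub, Prod.snd_sub]
  linarith

def triangleDet (u v w : ℝ × ℝ) : ℝ := (v.1 - u.1) * (w.2 - u.2) - (v.2 - u.2) * (w.1 - u.1)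

noncomputable def triangleMap (u v w : ℝ × ℝ) : (ℝ × ℝ) →ₗ[ℝ] ℝ × ℝ :=
  (LinearMap.fst ℝ ℝ ℝ).smulRight (v - u) + (LinearMap.snd ℝ ℝ ℝ).smulRight (w - u)

theorem triangleMap_apply (u v w x : ℝ × ℝ) :
    triangleMap u v w x = x.1 • (v - u) + x.2 • (w - u) :=
  rfl

theorem det_triangleMap (u v w : ℝ × ℝ) : (triangleMap u v w).det = triangleDet u v w := by
  rw [← LinearMap.det_toMatrix (Module.Basis.finTwoProd ℝ), Matrix.det_fin_two]
  simp only [LinearMap.toMatrix_apply, Module.Basis.finTwoProd_zero, Module.Basis.finTwoProd_one,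
    Module.Basis.coe_finTwoProd_repr, triangleMap_apply, one_smul, zero_smul, add_zero, zero_add,
    Matrix.cons_val_zero, Matrix.cons_val_one, Matrix.cons_val_fin_one, Prod.fst_sub, Prod.snd_sub,
    triangleDet]
  ring

theorem triangleDet_ne_zero {u v w : ℝ × ℝ} (h : AffineIndependent ℝ ![u, v, w]) :
    triangleDet u v w ≠ 0 := by
  rw [← det_triangleMap, Ne, LinearMap.det_eq_zero_iff_ker_ne_bot, not_not, Submodule.eq_bot_iff]
  intro x hx
  have hker : x.1 • (v - u) + x.2 • (w - u) = 0 := hx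
  have hw := h.eq_zero_of_sum_eq_zero (s := Finset.univ) (w := ![-x.1 - x.2, x.1, x.2])
    (by simp only [Fin.sum_univ_three, Matrix.cons_val_zero, Matrix.cons_val_one,
      Matrix.cons_val_two, Matrix.tail_cons, Matrix.head_cons]; ring)
    (by simp only [Fin.sum_univ_three, Matrix.cons_val_zero, Matrix.cons_val_one,
      Matrix.cons_val_two, Matrix.tail_cons, Matrix.head_cons, ← hker]; module)
  exact Prod.ext (hw 1 (Finset.mem_univ _)) (hw 2 (Finset.mem_univ _))

def stdTriangle : Set (ℝ × ℝ) := convexHull ℝ {0, (1, 0), (0, 1)}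

theorem convexHull_triple_eq_image (u v w : ℝ × ℝ) :
    convexHull ℝ {u, v, w} = (u + ·) '' (triangleMap u v w '' stdTriangle) := by
  rw [image_image]
  change _ = ⇑(AffineMap.const ℝ (ℝ × ℝ) u + (triangleMap u v w).toAffineMap) '' stdTriangle
  rw [stdTriangle, AffineMap.image_convexHull]
  simp [image_insert_eq, triangleMap_apply]

theorem volume_convexHull_triple (u v w : ℝ × ℝ) :
    volume (convexHull ℝ {u, v, w}) = ENNReal.ofReal |triangleDet u v w| * volume stdTriangle := by
  rw [convexHull_triple_eq_image, image_add_left, measure_preimage_add,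
    Measure.addHaar_image_linearMap, det_triangleMap]

theorem volume_stdTriangle_pos : 0 < volume stdTriangle := by
  have hsquare : Icc (0 : ℝ) (1 / 2) ×ˢ Icc (0 : ℝ) (1 / 2) ⊆ stdTriangle := by
    rintro ⟨x, y⟩ ⟨⟨hx, hx'⟩, ⟨hy, hy'⟩⟩
    simpa [stdTriangle] using smul_add_smul_add_smul_mem_convexHull (u := (0 : ℝ × ℝ))
      (v := (1, 0)) (w := (0, 1)) (by linarith : 0 ≤ 1 - x - y) hx hy (by ring)
  refine lt_of_lt_of_le ?_ (measure_mono hsquare)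
  rw [Measure.volume_eq_prod, Measure.prod_prod, Real.volume_Icc]
  norm_num

theorem volume_stdTriangle_ne_top : volume stdTriangle ≠ ⊤ :=
  ((toFinite _).isCompact_convexHull ℝ).measure_ne_top

def toPlane (m : ℕ × ℕ) : ℝ × ℝ := (m.1, m.2)

theorem one_le_abs_triangleDet_toPlane {m₁ m₂ m₃ : ℕ × ℕ}
    (h : AffineIndependent ℝ ![toPlane m₁, toPlane m₂, toPlane m₃]) :
    1 ≤ |triangleDet (toPlane m₁) (toPlane m₂) (toPlane m₃)| := by
  set z : ℤ := ((m₂.1 : ℤ) - m₁.1) * ((m₃.2 : ℤ) - m₁.2) - ((m₂.2 : ℤ) - m₁.2) * ((m₃.1 : ℤ) - m₁.1)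
  have hz : triangleDet (toPlane m₁) (toPlane m₂) (toPlane m₃) = z := by
    simp [z, triangleDet, toPlane]
  have hz0 : z ≠ 0 := by
    rintro h0
    exact triangleDet_ne_zero h (by rw [hz, h0, Int.cast_zero])
  rw [hz, ← Int.cast_abs]
  exact_mod_cast Int.one_le_abs hz0

def newtonTriangle (d : ℕ) : Set (ℝ × ℝ) := convexHull ℝ {0, ((d : ℝ), 0), (0, (d : ℝ))}

theorem volume_newtonTriangle (d : ℕ) :
    volume (newtonTriangle d) = (d ^ 2 : ℕ) * volume stdTriangle := by
  rw [newtonTriangle, volume_convexHull_triple]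
  congr
  simp [triangleDet, ← ENNReal.ofReal_natCast, sq]

theorem toPlane_mem_newtonTriangle {d : ℕ} {m : ℕ × ℕ} (hm : m ∈ tropSupport d) :
    toPlane m ∈ newtonTriangle d := by
  have hmd : m.1 + m.2 ≤ d := (Finset.mem_filter.1 hm).2
  have hle : (m.1 : ℝ) + m.2 ≤ d := by exact_mod_cast hmd
  -- this also holds for `d = 0`, since then `k = 0`
  have hcancel : ∀ k ≤ d, (k : ℝ) / d * d = k := fun k hk =>
    div_mul_cancel_of_imp fun hd => by norm_cast at hd ⊢; omega
  have := smul_add_smul_add_smul_mem_convexHull (u := (0 : ℝ × ℝ)) (v := ((d : ℝ), 0))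
    (w := (0, (d : ℝ))) (α := 1 - (m.1 + m.2) / d) (β := m.1 / d) (γ := m.2 / d)
    (sub_nonneg.2 (div_le_one_of_le₀ hle d.cast_nonneg)) (by positivity) (by positivity) (by ring)
  simpa [newtonTriangle, toPlane, hcancel m.1 (by omega), hcancel m.2 (by omega)] using this

theorem toPlane_mem_subdifferential {d : ℕ} {a : ℕ × ℕ → ℝ} {p : ℝ × ℝ} {m : ℕ × ℕ}
    (hm : m ∈ tropSupport d) (hmax : a m + (m.1 : ℝ) * p.1 + (m.2 : ℝ) * p.2 = tropPoly d a p) :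
    toPlane m ∈ subdifferential (tropPoly d a) p := by
  intro q
  have hq : a m + (m.1 : ℝ) * q.1 + (m.2 : ℝ) * q.2 ≤ tropPoly d a q :=
    Finset.le_sup' (fun m => a m + (m.1 : ℝ) * q.1 + (m.2 : ℝ) * q.2) hm
  simp only [toPlane]
  linarith

theorem exists_dualTriangle {d : ℕ} {a : ℕ × ℕ → ℝ} {p : ℝ × ℝ} (hp : p ∈ tropVertices d a) :
    ∃ T : Set (ℝ × ℝ), MeasurableSet T ∧ volume stdTriangle ≤ volume T ∧
      T ⊆ newtonTriangle d ∧ T ⊆ subdifferential (tropPoly d a) p := by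
  obtain ⟨m₁, hm₁, m₂, hm₂, m₃, hm₃, hmax₁, hmax₂, hmax₃, hind⟩ := hp
  refine ⟨convexHull ℝ {toPlane m₁, toPlane m₂, toPlane m₃},
    ((toFinite _).isCompact_convexHull ℝ).isClosed.measurableSet, ?_,
    convexHull_min ?_ (convex_convexHull ℝ _), convexHull_min ?_ (convex_subdifferential _ p)⟩
  · rw [volume_convexHull_triple]
    exact le_mul_of_one_le_left zero_le
      (ENNReal.one_le_ofReal.2 (one_le_abs_triangleDet_toPlane hind))
  · simp only [insert_subset_iff, singleton_subset_iff]
    exact ⟨toPlane_mem_newtonTriangle hm₁, toPlane_mem_newtonTriangle hm₂,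
      toPlane_mem_newtonTriangle hm₃⟩
  · simp only [insert_subset_iff, singleton_subset_iff]
    exact ⟨toPlane_mem_subdifferential hm₁ hmax₁, toPlane_mem_subdifferential hm₂ hmax₂,
      toPlane_mem_subdifferential hm₃ hmax₃⟩

theorem card_le_of_subset_tropVertices (d : ℕ) (a : ℕ × ℕ → ℝ) (F : Finset (ℝ × ℝ))
    (hF : ↑F ⊆ tropVertices d a) : F.card ≤ d ^ 2 := by
  choose! T hT using fun p (hp : p ∈ F) => exists_dualTriangle (hF hp)
  have hpack : (F.card : ℝ≥0∞) * volume stdTriangle ≤ (d ^ 2 : ℕ) * volume stdTriangle := by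
    rw [← volume_newtonTriangle]
    refine card_mul_le_measure_of_pairwise_aedisjoint (fun p hp => (hT p hp).1.nullMeasurableSet)
      (fun p hp q hq hpq => ?_) (fun p hp => (hT p hp).2.2.1) (fun p hp => (hT p hp).2.1)
    exact (aedisjoint_subdifferential _ hpq).mono (hT p hp).2.2.2 (hT q hq).2.2.2
  exact_mod_cast (ENNReal.mul_le_mul_iff_left volume_stdTriangle_pos.ne'
    volume_stdTriangle_ne_top).1 hpack

end TropicalCurve

theorem tropical_curve_vertices_card_le_general (d : ℕ) (a : ℕ × ℕ → ℝ) :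
    (tropVertices d a).Finite ∧ (tropVertices d a).ncard ≤ d ^ 2 :=
  Set.finite_and_ncard_le_of_forall_finset_card_le
    (TropicalCurve.card_le_of_subset_tropVertices d a)

/-- A tropical curve of degree `d` has at most `d²` vertices. -/
theorem tropical_curve_vertices_card_le (d : ℕ) (hd : 1 ≤ d) (a : ℕ × ℕ → ℝ) :
    (tropVertices d a).Finite ∧ (tropVertices d a).ncard ≤ d ^ 2 :=
  tropical_curve_vertices_card_le_general d a
end
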